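/- Let M = ⟨V, D, ·_M⟩ be a finite monadic Σ-PNmatrix with discriminator S̃ = {S̃_x}_{x∈V}, where each S̃_x is partitioned into Ω_x = {S ∈ S̃_x : S_M(x) ⊆ D} and ℧_x = {S ∈ S̃_x : S_M(x) ⊆ V∖D}. Then the multiple-conclusion calculus R_M^S̃ = R_∃ ∪ R_D ∪ R_Σ ∪ R_T is an S-analytic calculus for the multiple-conclusion consequence ▷_M, where: R_∃ contains, for each X ⊆ V and each choice set ℧*_X (one element of ℧_x for each x ∈ X) and Ω*_{V∖X} (one element of Ω_x for each x ∈ V∖X), the rule with premises ℧*_X(p) and conclusions Ω*_{V∖X}(p); R_D contains, for each x ∈ D, the rule with premises Ω_x(p) and conclusions {p} ∪ ℧_x(p), and for each x ∉ D, the rule with premises Ω_x(p) ∪ {p} and conclusions ℧_x(p); R_Σ contains, for each k-place © ∈ Σ, each x₁,…,x_k ∈ V and each y ∉ ©_M(x₁,…,x_k), the rule with premises ⋃_i Ω_{x_i}(p_i) ∪ Ω_y(©(p₁,…,p_k)) and conclusions ⋃_i ℧_{x_i}(p_i) ∪ ℧_y(©(p₁,…,p_k)); and R_T contains, for each X ⊆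 V with X ∉ T_M, the rule with premises ⋃_{x_i∈X} Ω_{x_i}(p_i) and conclusions ⋃_{x_i∈X} ℧_{x_i}(p_i). -/

import Mathlib

set_option autoImplicit false

namespace PNPaper

/-- Formulas over a propositional signature given by a type `C` of connectives
with arity function `ar`, generated over a set (type) `P` of sentential variables. -/
inductive Fm (C : Type) (ar : C → ℕ) (P : Type) : Type where
  | var : P → Fm C ar P
  | app : (c : C) → (Fin (ar c) → Fm C ar P) → Fm C ar P

variable {C : Type} {ar : C → ℕ} {P Q : Type} {V W : Type}

/-- Substitution, extended to the unique endomorphism of the formula algebra. -/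
def Fm.subst (σ : Q → Fm C ar P) : Fm C ar Q → Fm C ar P
  | .var q => σ q
  | .app c As => .app c (fun i => (As i).subst σ)

/-- The set of substitution instances of formulas in `Ax`. -/
def instSet (Ax : Set (Fm C ar P)) : Set (Fm C ar P) :=
  {B | ∃ A ∈ Ax, ∃ σ : P → Fm C ar P, B = A.subst σ}

/-- A formula uses only connectives from `S`. -/
def Fm.usesOnly (S : Set C) : Fm C ar P → Prop
  | .var _ => True
  | .app c As => c ∈ S ∧ ∀ i, (As i).usesOnly S

/-- All variables of the formula belong to `Vs`. -/
def Fm.varsIn (Vs : Set P) : Fm C ar P → Prop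
  | .var p => p ∈ Vs
  | .app _ As => ∀ i, (As i).varsIn Vs

/-- A Σ-PNmatrix: a set of truth-values (carrier), designated values,
and a (possibly partial, non-deterministic) truth-table for each connective. -/
structure Mat (C : Type) (ar : C → ℕ) (V : Type) where
  carrier : Set V
  desig : Set V
  int : (c : C) → (Fin (ar c) → V) → Set V

/-- Well-formedness: `D ⊆ V` and truth-tables take values in `V`. -/
def Mat.WF (M : Mat C ar V) : Prop :=
  M.desig ⊆ M.carrier ∧
  ∀ (c : C) (xs : Fin (ar c) → V), (∀ i, xs i ∈ M.carrier) → M.int c xs ⊆ M.carrier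

/-- An `M`-valuation. -/
def Mat.IsVal (M : Mat C ar V) (v : Fm C ar P → V) : Prop :=
  (∀ A, v A ∈ M.carrier) ∧
  ∀ (c : C) (As : Fin (ar c) → Fm C ar P), v (.app c As) ∈ M.int c (fun i => v (As i))

/-- The (single conclusion) consequence relation `⊢_M`. -/
def Mat.Conseq (M : Mat C ar V) (Γ : Set (Fm C ar P)) (A : Fm C ar P) : Prop :=
  ∀ v : Fm C ar P → V, M.IsVal v → (∀ B ∈ Γ, v B ∈ M.desig) → v A ∈ M.desig

/-- The strengthening `⊢_M^Ax` of `⊢_M` with (schema) axioms `Ax`. -/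
def Mat.ConseqAx (M : Mat C ar V) (Ax Γ : Set (Fm C ar P)) (A : Fm C ar P) : Prop :=
  M.Conseq (Γ ∪ instSet Ax) A

/-- The multiple-conclusion consequence relation `▷_M`. -/
def Mat.MConseq (M : Mat C ar V) (Γ Δ : Set (Fm C ar P)) : Prop :=
  ∀ v : Fm C ar P → V, M.IsVal v → (∀ B ∈ Γ, v B ∈ M.desig) → ∃ B ∈ Δ, v B ∈ M.desig

/-- The set `A_M(x₁,…,xₙ)` of possible values of `A` when `pᵢ ↦ xᵢ`. -/
def Mat.fmSet (M : Mat C ar V) (n : ℕ) (A : Fm C ar ℕ) (xs : Fin n → V) : Set V :=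
  {y | ∃ v : Fm C ar ℕ → V, M.IsVal v ∧ (∀ i : Fin n, v (Fm.var i.1) = xs i) ∧ v A = y}

/-- `M` is `S`-deterministic. -/
def Mat.DetOn (M : Mat C ar V) (S : Set C) : Prop :=
  ∀ c ∈ S, ∀ xs : Fin (ar c) → V, (∀ i, xs i ∈ M.carrier) → (M.int c xs).Subsingleton

/-- `M` is total. -/
def Mat.Total (M : Mat C ar V) : Prop :=
  ∀ (c : C) (xs : Fin (ar c) → V), (∀ i, xs i ∈ M.carrier) → (M.int c xs).Nonempty

/-- `M'` is a refinement of `M`. -/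
def IsRefinement (M' M : Mat C ar V) : Prop :=
  M'.carrier ⊆ M.carrier ∧
  M'.desig = M.desig ∩ M'.carrier ∧
  ∀ (c : C) (xs : Fin (ar c) → V), (∀ i, xs i ∈ M'.carrier) → M'.int c xs ⊆ M.int c xs

/-- `E` is an expansion function for `M` with contraction `ct`:
the sets `E x` (for truth-values `x` of `M`) are non-empty and `ct` picks, for each
element of `E x`, the unique `x` it expands (this forces pairwise disjointness). -/
def IsExpansion (M : Mat C ar V) (E : V → Set W) (ct : W → V) : Prop :=
  (∀ x ∈ M.carrier, (E x).Nonempty) ∧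
  (∀ x ∈ M.carrier, ∀ y ∈ E x, ct y = x)

/-- The `E`-expansion of `M`. -/
def expMat (M : Mat C ar V) (E : V → Set W) (ct : W → V) : Mat C ar W where
  carrier := ⋃ x ∈ M.carrier, E x
  desig := ⋃ x ∈ M.desig, E x
  int := fun c ys => ⋃ x ∈ M.int c (fun i => ct (ys i)), E x

/-- A rexpansion of `M` is a refinement of some `E`-expansion of `M`. -/
def IsRexpansion (M' : Mat C ar W) (M : Mat C ar V) : Prop :=
  ∃ (E : V → Set W) (ct : W → V), IsExpansion M E ct ∧ IsRefinement M' (expMat M E ct)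

/-- The set `S_M(x)` of possible values of the one-variable formula `S` (in the
variable `p = p₀`, here the variable `0`) when `p ↦ x`. -/
def sepSet {C : Type} {ar : C → ℕ} {V : Type} (M : Mat C ar V)
    (S : Fm C ar ℕ) (x : V) : Set V :=
  {y | ∃ v : Fm C ar ℕ → V, M.IsVal v ∧ v (Fm.var 0) = x ∧ v S = y}

/-- Two sets of truth-values are separated: one consists of designated values and
the other of undesignated ones. -/
def Separated {C : Type} {ar : C → ℕ} {V : Type} (M : Mat C ar V)
    (X Y : Set V) : Prop :=
  (X ⊆ M.desig ∧ Y ⊆ M.carrier \ M.desig) ∨ (Y ⊆ M.desig ∧ X ⊆ M.carrier \ M.desig)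

/-- `S` is a (monadic) separator for `x` and `y` in `M`. -/
def IsSeparator {C : Type} {ar : C → ℕ} {V : Type} (M : Mat C ar V)
    (S : Fm C ar ℕ) (x y : V) : Prop :=
  S.varsIn {0} ∧ (∀ z ∈ M.carrier, (sepSet M S z).Nonempty) ∧
  Separated M (sepSet M S x) (sepSet M S y)

/-- `M` is monadic: every pair of distinct truth-values has a separator. -/
def Monadic {C : Type} {ar : C → ℕ} {V : Type} (M : Mat C ar V) : Prop :=
  ∀ x ∈ M.carrier, ∀ y ∈ M.carrier, x ≠ y → ∃ S, IsSeparator M S x y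

/-- Multiple-conclusion (schematic) rules: a pair of sets of formulas
(premises / conclusions). -/
abbrev Rule (C : Type) (ar : C → ℕ) := Set (Fm C ar ℕ) × Set (Fm C ar ℕ)

/-- Tree-like multiple-conclusion derivability (Shoesmith–Smiley proofs) from
premise set `Γ` of the conclusion set `Δ`, using rules from `R` instantiated by
substitutions, where all formulas introduced by rule instances belong to `F`:
a proof either closes a branch on a formula of `Δ` already available, or applies a
rule instance whose premises are available, branching on each of its conclusions. -/
inductive MCD {C : Type} {ar : C → ℕ} (R : Set (Rule C ar))
    (F : Set (Fm C ar ℕ)) (Δ : Set (Fm C ar ℕ)) : Set (Fm C ar ℕ) → Prop where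
  | hyp {Γ : Set (Fm C ar ℕ)} {A : Fm C ar ℕ} (hA : A ∈ Γ) (hΔ : A ∈ Δ) : MCD R F Δ Γ
  | app {Γ : Set (Fm C ar ℕ)} (prem concl : Set (Fm C ar ℕ)) (σ : ℕ → Fm C ar ℕ)
      (hR : (prem, concl) ∈ R)
      (hprem : ∀ B ∈ prem, Fm.subst σ B ∈ Γ)
      (hpF : ∀ B ∈ prem, Fm.subst σ B ∈ F)
      (hcF : ∀ B ∈ concl, Fm.subst σ B ∈ F)
      (hbr : ∀ B ∈ concl, MCD R F Δ (insert (Fm.subst σ B) Γ)) : MCD R F Δ Γ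

/-- The set of subformulas of a formula. -/
def Fm.subf {C : Type} {ar : C → ℕ} {P : Type} : Fm C ar P → Set (Fm C ar P)
  | .var p => {Fm.var p}
  | .app c As => insert (Fm.app c As) (⋃ i, (As i).subf)

/-- The `S`-subformulas of the formulas of `Γ`: subformulas of formulas of `Γ`
together with `S(B')` for `S ∈ SS` (one-variable formulas) and `B'` such a subformula. -/
def genSub {C : Type} {ar : C → ℕ} (SS : Set (Fm C ar ℕ)) (Γ : Set (Fm C ar ℕ)) :
    Set (Fm C ar ℕ) :=
  (⋃ B ∈ Γ, B.subf) ∪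
  {A | ∃ s ∈ SS, ∃ B ∈ Γ, ∃ B' ∈ B.subf, A = s.subst (fun _ => B')}

/-- `Φ(B) = {S(B) : S ∈ Φ}` for a set `Φ` of one-variable formulas. -/
def appSet {C : Type} {ar : C → ℕ} (Φ : Set (Fm C ar ℕ)) (B : Fm C ar ℕ) :
    Set (Fm C ar ℕ) :=
  (fun s => s.subst (fun _ => B)) '' Φ

/-- The discriminator's component `S̃ₓ = {S^{xy} : y ≠ x}` for a family `Sf` of
separators. -/
def Stilde {C : Type} {ar : C → ℕ} {V : Type} (M : Mat C ar V)
    (Sf : V → V → Fm C ar ℕ) (x : V) : Set (Fm C ar ℕ) :=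
  {s | ∃ y ∈ M.carrier, y ≠ x ∧ s = Sf x y}

/-- `Ωₓ`: the separators of `S̃ₓ` whose value-set at `x` is designated. -/
def Omega {C : Type} {ar : C → ℕ} {V : Type} (M : Mat C ar V)
    (Sf : V → V → Fm C ar ℕ) (x : V) : Set (Fm C ar ℕ) :=
  {s ∈ Stilde M Sf x | sepSet M s x ⊆ M.desig}

/-- `℧ₓ`: the separators of `S̃ₓ` whose value-set at `x` is undesignated. -/
def Mho {C : Type} {ar : C → ℕ} {V : Type} (M : Mat C ar V)
    (Sf : V → V → Fm C ar ℕ) (x : V) : Set (Fm C ar ℕ) :=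
  {s ∈ Stilde M Sf x | sepSet M s x ⊆ M.carrier \ M.desig}

/-- The possible choice sets `Φ*_X`: subsets of `⋃_{x∈X} Φₓ` meeting each `Φₓ`. -/
def ChoiceOn {C : Type} {ar : C → ℕ} {V : Type} (X : Set V)
    (Φ : V → Set (Fm C ar ℕ)) : Set (Set (Fm C ar ℕ)) :=
  {T | T ⊆ (⋃ x ∈ X, Φ x) ∧ ∀ x ∈ X, (T ∩ Φ x).Nonempty}

/-- `T_M`: the sets of truth-values jointly attainable by a single valuation. -/
def TMset {C : Type} {ar : C → ℕ} {V : Type} (M : Mat C ar V) : Set (Set V) :=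
  {X | ∃ v : Fm C ar ℕ → V, M.IsVal v ∧ X ⊆ Set.range v}

/-- The rules `R_∃`. -/
def Rexists {C : Type} {ar : C → ℕ} {V : Type} (M : Mat C ar V)
    (Sf : V → V → Fm C ar ℕ) : Set (Rule C ar) :=
  {r | ∃ X ⊆ M.carrier, ∃ T ∈ ChoiceOn X (Mho M Sf),
        ∃ T' ∈ ChoiceOn (M.carrier \ X) (Omega M Sf),
        r = (appSet T (Fm.var 0), appSet T' (Fm.var 0))}

/-- The rules `R_D`. -/
def RD {C : Type} {ar : C → ℕ} {V : Type} (M : Mat C ar V)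
    (Sf : V → V → Fm C ar ℕ) : Set (Rule C ar) :=
  {r | ∃ x ∈ M.desig,
        r = (appSet (Omega M Sf x) (Fm.var 0),
             insert (Fm.var 0) (appSet (Mho M Sf x) (Fm.var 0)))} ∪
  {r | ∃ x ∈ M.carrier \ M.desig,
        r = (insert (Fm.var 0) (appSet (Omega M Sf x) (Fm.var 0)),
             appSet (Mho M Sf x) (Fm.var 0))}

/-- The rules `R_Σ`. -/
def RSig {C : Type} {ar : C → ℕ} {V : Type} (M : Mat C ar V)
    (Sf : V → V → Fm C ar ℕ) : Set (Rule C ar) :=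
  {r | ∃ (c : C) (xs : Fin (ar c) → V), (∀ i, xs i ∈ M.carrier) ∧
        ∃ y ∈ M.carrier, y ∉ M.int c xs ∧
        r = ((⋃ i, appSet (Omega M Sf (xs i)) (Fm.var i.1)) ∪
               appSet (Omega M Sf y) (Fm.app c (fun i => Fm.var i.1)),
             (⋃ i, appSet (Mho M Sf (xs i)) (Fm.var i.1)) ∪
               appSet (Mho M Sf y) (Fm.app c (fun i => Fm.var i.1)))}

/-- The rules `R_T`, with distinct variables indexed via an injection `ι`. -/
def RT {C : Type} {ar : C → ℕ} {V : Type} (M : Mat C ar V)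
    (Sf : V → V → Fm C ar ℕ) (ι : V → ℕ) : Set (Rule C ar) :=
  {r | ∃ X ⊆ M.carrier, X ∉ TMset M ∧
        r = (⋃ x ∈ X, appSet (Omega M Sf x) (Fm.var (ι x)),
             ⋃ x ∈ X, appSet (Mho M Sf x) (Fm.var (ι x)))}

/-- The calculus `R_M^{S̃} = R_∃ ∪ R_D ∪ R_Σ ∪ R_T`. -/
def calcR {C : Type} {ar : C → ℕ} {V : Type} (M : Mat C ar V)
    (Sf : V → V → Fm C ar ℕ) (ι : V → ℕ) : Set (Rule C ar) :=
  Rexists M Sf ∪ RD M Sf ∪ RSig M Sf ∪ RT M Sf ι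

/-- The underlying set `𝒮` of monadic separators. -/
def sepFam {C : Type} {ar : C → ℕ} {V : Type} (M : Mat C ar V)
    (Sf : V → V → Fm C ar ℕ) : Set (Fm C ar ℕ) :=
  {s | ∃ x ∈ M.carrier, ∃ y ∈ M.carrier, y ≠ x ∧ s = Sf x y}

/-!
The calculus is sound because the discriminator reads off truth-values: for a valuation `v`
and `x ∈ V`, `v B = x` exactly when every formula of `Ωₓ(B)` is designated and every formula
of `℧ₓ(B)` is undesignated, and each rule of `R_M^{S̃}` is the syntactic form of one semantic
constraint on such values (some value exists, designation, the truth tables, joint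
attainability).

For completeness and analyticity, extend `Γ` by Zorn's lemma (the rules are finite) to a
maximal `G` from which `Δ` is not derivable using only `𝒮`-subformulas. Reading the same
discriminator with `G` in place of the designated formulas assigns each subformula of `Γ ∪ Δ`
a value: `R_∃` makes it exist, `R_Σ` makes these values respect the truth tables, `R_D` makes
`B ∈ G` equivalent to its value being designated, and `R_T` makes the values jointly
attainable, which is what allows this partial valuation to be extended to a total one.
-/

theorem Fm.subst_subst {U : Type} (σ : P → Fm C ar U) (τ : Q → Fm C ar P) (A : Fm C ar Q) :
    (A.subst τ).subst σ = A.subst fun q => (τ q).subst σ := by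
  induction A with
  | var q => rfl
  | app c As ih => exact congrArg (Fm.app c) (funext ih)

theorem image_subst_appSet (σ : ℕ → Fm C ar ℕ) (Φ : Set (Fm C ar ℕ)) (A : Fm C ar ℕ) :
    Fm.subst σ '' appSet Φ A = appSet Φ (A.subst σ) := by
  simp only [appSet, Set.image_image, Fm.subst_subst]

theorem Fm.self_mem_subf (B : Fm C ar P) : B ∈ B.subf := by
  cases B with
  | var p => rfl
  | app c As => exact Set.mem_insert _ _

theorem Fm.subf_subset_of_mem {A B : Fm C ar P} (h : A ∈ B.subf) : A.subf ⊆ B.subf := by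
  induction B with
  | var p => cases h; exact subset_rfl
  | app c As ih =>
      rcases h with rfl | h
      · exact subset_rfl
      · obtain ⟨i, hi⟩ := Set.mem_iUnion.1 h
        exact (ih i hi).trans fun _ h => Set.mem_insert_of_mem _ (Set.mem_iUnion_of_mem i h)

theorem Fm.mem_biUnion_subf_of_app {Θ : Set (Fm C ar P)} {c : C} {As : Fin (ar c) → Fm C ar P}
    (h : Fm.app c As ∈ ⋃ B ∈ Θ, B.subf) (i : Fin (ar c)) : As i ∈ ⋃ B ∈ Θ, B.subf := by
  obtain ⟨B, hB, hAB⟩ := Set.mem_iUnion₂.1 h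
  exact Set.mem_biUnion hB
    (Fm.subf_subset_of_mem hAB (.inr (Set.mem_iUnion_of_mem i (As i).self_mem_subf)))

theorem Mat.IsVal.comp_subst {M : Mat C ar V} {v : Fm C ar P → V} (hv : M.IsVal v)
    (σ : Q → Fm C ar P) : M.IsVal (v ∘ Fm.subst σ) :=
  ⟨fun _ => hv.1 _, fun c As => hv.2 c fun i => (As i).subst σ⟩

theorem mem_sepSet_of_isVal {M : Mat C ar V} {v : Fm C ar ℕ → V} (hv : M.IsVal v)
    (s B : Fm C ar ℕ) : v (s.subst fun _ => B) ∈ sepSet M s (v B) :=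
  ⟨v ∘ Fm.subst fun _ => B, hv.comp_subst _, rfl, rfl⟩

/-- `T` plays the role of the set of designated formulas: `v ⁻¹' M.desig` for a valuation
`v`, or a maximal non-derivable set in the completeness proof. -/
def IsDiscrValue (M : Mat C ar V) (Sf : V → V → Fm C ar ℕ) (T : Set (Fm C ar ℕ))
    (B : Fm C ar ℕ) (x : V) : Prop :=
  x ∈ M.carrier ∧ appSet (Omega M Sf x) B ⊆ T ∧ Disjoint (appSet (Mho M Sf x) B) T

section Soundness

variable {M : Mat C ar V} {Sf : V → V → Fm C ar ℕ}

theorem isDiscrValue_of_isVal {v : Fm C ar ℕ → V} (hv : M.IsVal v) (B : Fm C ar ℕ) :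
    IsDiscrValue M Sf (v ⁻¹' M.desig) B (v B) := by
  refine ⟨hv.1 B, ?_, Set.disjoint_left.2 ?_⟩
  · rintro _ ⟨s, hs, rfl⟩
    exact hs.2 (mem_sepSet_of_isVal hv s B)
  · rintro _ ⟨s, hs, rfl⟩
    exact (hs.2 (mem_sepSet_of_isVal hv s B)).2

theorem IsDiscrValue.eq_of_isVal
    (hsep : ∀ x ∈ M.carrier, ∀ y ∈ M.carrier, x ≠ y → IsSeparator M (Sf x y) x y)
    {v : Fm C ar ℕ → V} (hv : M.IsVal v) {B : Fm C ar ℕ} {x : V}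
    (h : IsDiscrValue M Sf (v ⁻¹' M.desig) B x) : v B = x := by
  obtain ⟨hx, hΩ, h℧⟩ := h
  by_contra hne
  have hval := mem_sepSet_of_isVal hv (Sf x (v B)) B
  have hS : Sf x (v B) ∈ Stilde M Sf x := ⟨v B, hv.1 B, hne, rfl⟩
  rcases (hsep x hx (v B) (hv.1 B) (Ne.symm hne)).2.2 with ⟨hxD, hyD⟩ | ⟨hyD, hxD⟩
  · exact (hyD hval).2 (hΩ ⟨_, ⟨hS, hxD⟩, rfl⟩)
  · exact Set.disjoint_left.1 h℧ ⟨_, ⟨hS, hxD⟩, rfl⟩ (hyD hval)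

def Mat.SoundRule (M : Mat C ar V) (r : Rule C ar) : Prop :=
  ∀ v : Fm C ar ℕ → V, M.IsVal v → r.1 ⊆ v ⁻¹' M.desig → (r.2 ∩ v ⁻¹' M.desig).Nonempty

theorem MCD.mconseq {R : Set (Rule C ar)} {F Δ Γ : Set (Fm C ar ℕ)}
    (hR : ∀ r ∈ R, M.SoundRule r) (h : MCD R F Δ Γ) : M.MConseq Γ Δ := by
  induction h with
  | hyp hA hΔ => exact fun v _ hv => ⟨_, hΔ, hv _ hA⟩
  | app prem concl σ hr hprem _ _ _ ih =>
      intro v hv hΓ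
      obtain ⟨B, hB, hBD⟩ :=
        hR _ hr (v ∘ Fm.subst σ) (hv.comp_subst σ) fun B hB => hΓ _ (hprem B hB)
      exact ih B hB v hv (Set.forall_mem_insert.2 ⟨hBD, hΓ⟩)

theorem rexists_sound {r : Rule C ar} (hr : r ∈ Rexists M Sf) : M.SoundRule r := by
  obtain ⟨X, -, T, hT, T', hT', rfl⟩ := hr
  intro v hv hprem
  have hx := isDiscrValue_of_isVal (Sf := Sf) hv (.var 0)
  by_cases hX : v (.var 0) ∈ X
  · obtain ⟨s, hsT, hs⟩ := hT.2 _ hX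
    exact absurd (hprem ⟨s, hsT, rfl⟩) (Set.disjoint_left.1 hx.2.2 ⟨s, hs, rfl⟩)
  · obtain ⟨s, hsT', hs⟩ := hT'.2 _ ⟨hv.1 _, hX⟩
    exact ⟨_, ⟨s, hsT', rfl⟩, hx.2.1 ⟨s, hs, rfl⟩⟩

theorem rd_sound (hD : M.desig ⊆ M.carrier)
    (hsep : ∀ x ∈ M.carrier, ∀ y ∈ M.carrier, x ≠ y → IsSeparator M (Sf x y) x y)
    {r : Rule C ar} (hr : r ∈ RD M Sf) : M.SoundRule r := by
  rcases hr with ⟨x, hxD, rfl⟩ | ⟨x, hxD, rfl⟩ <;> intro v hv hprem <;>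
    rw [← Set.not_disjoint_iff_nonempty_inter] <;> intro hconcl
  · rw [Set.disjoint_insert_left] at hconcl
    have hx := IsDiscrValue.eq_of_isVal hsep hv ⟨hD hxD, hprem, hconcl.2⟩
    exact hconcl.1 (Set.mem_preimage.2 (hx ▸ hxD))
  · rw [Set.insert_subset_iff] at hprem
    have hx := IsDiscrValue.eq_of_isVal hsep hv ⟨hxD.1, hprem.2, hconcl⟩
    exact hxD.2 (hx ▸ hprem.1)

theorem rSig_sound
    (hsep : ∀ x ∈ M.carrier, ∀ y ∈ M.carrier, x ≠ y → IsSeparator M (Sf x y) x y)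
    {r : Rule C ar} (hr : r ∈ RSig M Sf) : M.SoundRule r := by
  obtain ⟨c, xs, hxs, y, hy, hyc, rfl⟩ := hr
  intro v hv hprem
  rw [← Set.not_disjoint_iff_nonempty_inter]
  intro hconcl
  simp only [Set.union_subset_iff, Set.iUnion_subset_iff] at hprem
  simp only [Set.disjoint_union_left, Set.disjoint_iUnion_left] at hconcl
  have hargs : (fun i => v (Fm.var i.1)) = xs :=
    funext fun i => IsDiscrValue.eq_of_isVal hsep hv ⟨hxs i, hprem.1 i, hconcl.1 i⟩
  have happ := IsDiscrValue.eq_of_isVal hsep hv ⟨hy, hprem.2, hconcl.2⟩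
  exact hyc (happ ▸ hargs ▸ hv.2 c _)

theorem rt_sound
    (hsep : ∀ x ∈ M.carrier, ∀ y ∈ M.carrier, x ≠ y → IsSeparator M (Sf x y) x y)
    {ι : V → ℕ} {r : Rule C ar} (hr : r ∈ RT M Sf ι) : M.SoundRule r := by
  obtain ⟨X, hX, hXT, rfl⟩ := hr
  intro v hv hprem
  rw [← Set.not_disjoint_iff_nonempty_inter]
  intro hconcl
  simp only [Set.iUnion₂_subset_iff] at hprem
  simp only [Set.disjoint_iUnion₂_left] at hconcl
  exact hXT ⟨v, hv, fun x hx =>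
    ⟨_, IsDiscrValue.eq_of_isVal hsep hv ⟨hX hx, hprem x hx, hconcl x hx⟩⟩⟩

theorem calcR_sound (hD : M.desig ⊆ M.carrier)
    (hsep : ∀ x ∈ M.carrier, ∀ y ∈ M.carrier, x ≠ y → IsSeparator M (Sf x y) x y)
    {ι : V → ℕ} : ∀ r ∈ calcR M Sf ι, M.SoundRule r := by
  rintro r (((hr | hr) | hr) | hr)
  · exact rexists_sound hr
  · exact rd_sound hD hsep hr
  · exact rSig_sound hsep hr
  · exact rt_sound hsep hr

end Soundness

section Derivations

variable {R : Set (Rule C ar)} {F Δ Γ : Set (Fm C ar ℕ)}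

theorem MCD.mono_left (h : MCD R F Δ Γ) {Γ' : Set (Fm C ar ℕ)} (hΓ : Γ ⊆ Γ') :
    MCD R F Δ Γ' := by
  induction h generalizing Γ' with
  | hyp hA hΔ => exact .hyp (hΓ hA) hΔ
  | app prem concl σ hr hprem hpF hcF _ ih =>
      exact .app prem concl σ hr (fun B hB => hΓ (hprem B hB)) hpF hcF
        fun B hB => ih B hB (Set.insert_subset_insert hΓ)

theorem MCD.mono_F (h : MCD R F Δ Γ) {F' : Set (Fm C ar ℕ)} (hF : F ⊆ F') : MCD R F' Δ Γ := by
  induction h with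
  | hyp hA hΔ => exact .hyp hA hΔ
  | app prem concl σ hr hprem hpF hcF _ ih =>
      exact .app prem concl σ hr hprem (fun B hB => hF (hpF B hB)) (fun B hB => hF (hcF B hB)) ih

theorem MCD.exists_finite_subset (hR : ∀ r ∈ R, r.1.Finite ∧ r.2.Finite)
    (h : MCD R F Δ Γ) : ∃ Γ₀ ⊆ Γ, Γ₀.Finite ∧ MCD R F Δ Γ₀ := by
  induction h with
  | hyp hA hΔ => exact ⟨{_}, Set.singleton_subset_iff.2 hA, Set.finite_singleton _, .hyp rfl hΔ⟩
  | @app Γ prem concl σ hr hprem hpF hcF _ ih =>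
      choose! Γ₀ hΓ₀ hfin hd using ih
      -- each branch only needs what it assumes besides its own new conclusion
      refine ⟨Fm.subst σ '' prem ∪ ⋃ B ∈ concl, Γ₀ B \ {B.subst σ}, ?_, ?_, ?_⟩
      · rintro A (⟨B, hB, rfl⟩ | hA)
        · exact hprem B hB
        · obtain ⟨B, hB, hA, hne⟩ := Set.mem_iUnion₂.1 hA
          exact (hΓ₀ B hB hA).resolve_left hne
      · exact ((hR _ hr).1.image _).union ((hR _ hr).2.biUnion fun B hB => (hfin B hB).sdiff)
      · refine .app prem concl σ hr (fun B hB => .inl ⟨B, hB, rfl⟩) hpF hcF fun B hB => ?_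
        refine (hd B hB).mono_left fun A hA => ?_
        by_cases hAB : A = B.subst σ
        · exact .inl hAB
        · exact .inr (.inr (Set.mem_biUnion hB ⟨hA, hAB⟩))

def RuleClosed (R : Set (Rule C ar)) (F G : Set (Fm C ar ℕ)) : Prop :=
  ∀ r ∈ R, ∀ σ : ℕ → Fm C ar ℕ, Fm.subst σ '' r.1 ⊆ G → Fm.subst σ '' r.1 ⊆ F →
    Fm.subst σ '' r.2 ⊆ F → (Fm.subst σ '' r.2 ∩ G).Nonempty

theorem RuleClosed.mono {R' : Set (Rule C ar)} {G : Set (Fm C ar ℕ)} (hG : RuleClosed R F G)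
    (hR : R' ⊆ R) : RuleClosed R' F G :=
  fun r hr => hG r (hR hr)

theorem exists_ruleClosed_of_not_mcd (hR : ∀ r ∈ R, r.1.Finite ∧ r.2.Finite)
    (h : ¬ MCD R F Δ Γ) : ∃ G, Γ ⊆ G ∧ Disjoint G Δ ∧ RuleClosed R F G := by
  have hchain : ∀ c ⊆ {G | ¬ MCD R F Δ G}, IsChain (· ⊆ ·) c → c.Nonempty →
      ∃ G ∈ {G | ¬ MCD R F Δ G}, ∀ s ∈ c, s ⊆ G := by
    refine fun c hc hchain hne => ⟨⋃₀ c, fun hd => ?_, fun _ => Set.subset_sUnion_of_mem⟩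
    obtain ⟨Γ₀, hΓ₀, hfin, hd₀⟩ := hd.exists_finite_subset hR
    obtain ⟨t, htc, hsub⟩ :=
      hchain.directedOn.exists_mem_subset_of_finite_of_subset_sUnion hne hfin hΓ₀
    exact hc htc (hd₀.mono_left hsub)
  obtain ⟨G, hΓG, hG⟩ := zorn_subset_nonempty _ hchain Γ h
  refine ⟨G, hΓG, Set.disjoint_left.2 fun A hAG hAΔ => hG.1 (.hyp hAG hAΔ), ?_⟩
  rintro ⟨prem, concl⟩ hr σ hprem hpF hcF
  by_contra hno
  refine hG.1 (.app prem concl σ hr (Set.image_subset_iff.1 hprem) (Set.image_subset_iff.1 hpF)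
    (Set.image_subset_iff.1 hcF) fun B hB => ?_)
  by_contra hB'
  exact hno ⟨_, ⟨B, hB, rfl⟩, hG.2 hB' (Set.subset_insert _ _) (Set.mem_insert _ _)⟩

end Derivations

section Finiteness

variable {M : Mat C ar V}

theorem stilde_finite (hfin : M.carrier.Finite) (Sf : V → V → Fm C ar ℕ) (x : V) :
    (Stilde M Sf x).Finite :=
  (hfin.image (Sf x)).subset fun _ ⟨y, hy, _, hs⟩ => ⟨y, hy, hs.symm⟩

theorem omega_finite (hfin : M.carrier.Finite) (Sf : V → V → Fm C ar ℕ) (x : V) :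
    (Omega M Sf x).Finite :=
  (stilde_finite hfin Sf x).subset (Set.sep_subset _ _)

theorem mho_finite (hfin : M.carrier.Finite) (Sf : V → V → Fm C ar ℕ) (x : V) :
    (Mho M Sf x).Finite :=
  (stilde_finite hfin Sf x).subset (Set.sep_subset _ _)

theorem calcR_finite (hfin : M.carrier.Finite) {Sf : V → V → Fm C ar ℕ} {ι : V → ℕ} :
    ∀ r ∈ calcR M Sf ι, r.1.Finite ∧ r.2.Finite := by
  have hΩ (x : V) (B : Fm C ar ℕ) : (appSet (Omega M Sf x) B).Finite :=
    (omega_finite hfin Sf x).image _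
  have h℧ (x : V) (B : Fm C ar ℕ) : (appSet (Mho M Sf x) B).Finite :=
    (mho_finite hfin Sf x).image _
  rintro r (((⟨X, hX, T, hT, T', hT', rfl⟩ | hr) | ⟨c, xs, -, y, -, -, rfl⟩) | ⟨X, hX, -, rfl⟩)
  · exact ⟨(((hfin.subset hX).biUnion fun x _ => mho_finite hfin Sf x).subset hT.1).image _,
      ((hfin.sdiff.biUnion fun x _ => omega_finite hfin Sf x).subset hT'.1).image _⟩
  · rcases hr with ⟨x, -, rfl⟩ | ⟨x, -, rfl⟩
    · exact ⟨hΩ x _, (h℧ x _).insert _⟩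
    · exact ⟨(hΩ x _).insert _, h℧ x _⟩
  · exact ⟨(Set.finite_iUnion fun i => hΩ (xs i) _).union (hΩ y _),
      (Set.finite_iUnion fun i => h℧ (xs i) _).union (h℧ y _)⟩
  · exact ⟨(hfin.subset hX).biUnion fun x _ => hΩ x _,
      (hfin.subset hX).biUnion fun x _ => h℧ x _⟩

end Finiteness

instance [Inhabited P] : Inhabited (Fm C ar P) := ⟨.var default⟩

open Classical in
noncomputable def Fm.graft (S : Set (Fm C ar P)) (t : Fm C ar P → Fm C ar P) :
    Fm C ar P → Fm C ar P
  | .var p => if Fm.var p ∈ S then t (.var p) else .var p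
  | .app c As => if Fm.app c As ∈ S then t (.app c As) else .app c fun i => graft S t (As i)

theorem Fm.graft_of_mem {S : Set (Fm C ar P)} {t : Fm C ar P → Fm C ar P} {B : Fm C ar P}
    (hB : B ∈ S) : B.graft S t = t B := by
  cases B <;> exact if_pos hB

theorem Fm.graft_app_of_notMem {S : Set (Fm C ar P)} {t : Fm C ar P → Fm C ar P} {c : C}
    {As : Fin (ar c) → Fm C ar P} (h : Fm.app c As ∉ S) :
    (Fm.app c As).graft S t = .app c fun i => (As i).graft S t :=
  if_neg h

/-- Graft onto each maximal formula of `S` a formula that a valuation attaining `f '' S` sends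
to the prescribed value. -/
theorem exists_isVal_eqOn {M : Mat C ar V} {S : Set (Fm C ar ℕ)} {f : Fm C ar ℕ → V}
    (hS : ∀ c As, Fm.app c As ∈ S → ∀ i, As i ∈ S)
    (hf : ∀ c As, Fm.app c As ∈ S → f (.app c As) ∈ M.int c fun i => f (As i))
    (hT : f '' S ∈ TMset M) : ∃ u, M.IsVal u ∧ Set.EqOn u f S := by
  obtain ⟨w, hw, hSw⟩ := hT
  set t := Function.invFun w ∘ f
  have hu (B : Fm C ar ℕ) (hB : B ∈ S) : w (B.graft S t) = f B := by
    rw [Fm.graft_of_mem hB]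
    exact Function.invFun_eq (hSw ⟨B, hB, rfl⟩)
  refine ⟨fun B => w (B.graft S t), ⟨fun _ => hw.1 _, fun c As => ?_⟩, hu⟩
  dsimp only
  by_cases hA : Fm.app c As ∈ S
  · have hargs : (fun i => w ((As i).graft S t)) = fun i => f (As i) :=
      funext fun i => hu _ (hS c As hA i)
    rw [hu _ hA, hargs]
    exact hf c As hA
  · rw [Fm.graft_app_of_notMem hA]
    exact hw.2 c _

section Completeness

variable {M : Mat C ar V} {Sf : V → V → Fm C ar ℕ} {F G : Set (Fm C ar ℕ)}

def SepInstancesIn (M : Mat C ar V) (Sf : V → V → Fm C ar ℕ) (B : Fm C ar ℕ)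
    (F : Set (Fm C ar ℕ)) : Prop :=
  ∀ x ∈ M.carrier, appSet (Stilde M Sf x) B ⊆ F

theorem SepInstancesIn.omega {B : Fm C ar ℕ} (hB : SepInstancesIn M Sf B F) {x : V}
    (hx : x ∈ M.carrier) : appSet (Omega M Sf x) B ⊆ F :=
  (Set.image_mono (Set.sep_subset _ _)).trans (hB x hx)

theorem SepInstancesIn.mho {B : Fm C ar ℕ} (hB : SepInstancesIn M Sf B F) {x : V}
    (hx : x ∈ M.carrier) : appSet (Mho M Sf x) B ⊆ F :=
  (Set.image_mono (Set.sep_subset _ _)).trans (hB x hx)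

theorem RuleClosed.exists_isDiscrValue (hG : RuleClosed (Rexists M Sf) F G) {B : Fm C ar ℕ}
    (hB : SepInstancesIn M Sf B F) : ∃ x, IsDiscrValue M Sf G B x := by
  by_contra! hno
  set X := {x ∈ M.carrier | ∃ s ∈ Mho M Sf x, s.subst (fun _ => B) ∈ G}
  set T := {s ∈ ⋃ x ∈ X, Mho M Sf x | s.subst (fun _ => B) ∈ G}
  set T' := {s ∈ ⋃ x ∈ M.carrier \ X, Omega M Sf x | s.subst (fun _ => B) ∉ G}
  have hT : T ∈ ChoiceOn X (Mho M Sf) := by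
    refine ⟨Set.sep_subset _ _, fun x hx => ?_⟩
    obtain ⟨s, hs, hsG⟩ := hx.2
    exact ⟨s, ⟨Set.mem_biUnion hx hs, hsG⟩, hs⟩
  have hT' : T' ∈ ChoiceOn (M.carrier \ X) (Omega M Sf) := by
    refine ⟨Set.sep_subset _ _, fun x hx => ?_⟩
    have hdisj : Disjoint (appSet (Mho M Sf x) B) G := by
      refine Set.disjoint_left.2 ?_
      rintro _ ⟨s, hs, rfl⟩ hsG
      exact hx.2 ⟨hx.1, s, hs, hsG⟩
    obtain ⟨_, ⟨s, hs, rfl⟩, hsG⟩ := Set.not_subset.1 fun hΩ => hno x ⟨hx.1, hΩ, hdisj⟩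
    exact ⟨s, ⟨Set.mem_biUnion hx hs, hsG⟩, hs⟩
  have hclosed := hG _ ⟨X, Set.sep_subset _ _, T, hT, T', hT', rfl⟩ fun _ => B
  simp only [image_subst_appSet, Fm.subst] at hclosed
  have hTF : ∀ U ⊆ ⋃ x ∈ M.carrier, Stilde M Sf x, appSet U B ⊆ F := by
    rintro U hU _ ⟨s, hs, rfl⟩
    obtain ⟨x, hx, hs⟩ := Set.mem_iUnion₂.1 (hU hs)
    exact hB x hx ⟨s, hs, rfl⟩
  have hTS : T ⊆ ⋃ x ∈ M.carrier, Stilde M Sf x := fun s hs =>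
    let ⟨x, hx, hs⟩ := Set.mem_iUnion₂.1 hs.1
    Set.mem_biUnion hx.1 hs.1
  have hT'S : T' ⊆ ⋃ x ∈ M.carrier, Stilde M Sf x := fun s hs =>
    let ⟨x, hx, hs⟩ := Set.mem_iUnion₂.1 hs.1
    Set.mem_biUnion hx.1 hs.1
  obtain ⟨_, ⟨s, hs, rfl⟩, hsG⟩ :=
    hclosed (fun _ ⟨s, hs, h⟩ => h ▸ hs.2) (hTF T hTS) (hTF T' hT'S)
  exact hs.2 hsG

theorem RuleClosed.mem_iff_of_isDiscrValue (hG : RuleClosed (RD M Sf) F G) {B : Fm C ar ℕ}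
    {x : V} (hx : IsDiscrValue M Sf G B x) (hBF : B ∈ F) (hB : SepInstancesIn M Sf B F) :
    B ∈ G ↔ x ∈ M.desig := by
  constructor
  · intro hBG
    by_contra hxD
    have hclosed := hG _ (.inr ⟨x, ⟨hx.1, hxD⟩, rfl⟩) fun _ => B
    simp only [Set.image_insert_eq, image_subst_appSet, Fm.subst] at hclosed
    obtain ⟨A, hA, hAG⟩ := hclosed (Set.insert_subset hBG hx.2.1)
      (Set.insert_subset hBF (hB.omega hx.1)) (hB.mho hx.1)
    exact Set.disjoint_left.1 hx.2.2 hA hAG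
  · intro hxD
    have hclosed := hG _ (.inl ⟨x, hxD, rfl⟩) fun _ => B
    simp only [Set.image_insert_eq, image_subst_appSet, Fm.subst] at hclosed
    obtain ⟨A, rfl | hA, hAG⟩ := hclosed hx.2.1 (hB.omega hx.1)
      (Set.insert_subset hBF (hB.mho hx.1))
    · exact hAG
    · exact absurd hAG (Set.disjoint_left.1 hx.2.2 hA)

theorem RuleClosed.mem_int_of_isDiscrValue (hG : RuleClosed (RSig M Sf) F G) {c : C}
    {As : Fin (ar c) → Fm C ar ℕ} {xs : Fin (ar c) → V} {y : V}
    (hAs : ∀ i, IsDiscrValue M Sf G (As i) (xs i)) (happ : IsDiscrValue M Sf G (.app c As) y)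
    (hAsF : ∀ i, SepInstancesIn M Sf (As i) F) (happF : SepInstancesIn M Sf (.app c As) F) :
    y ∈ M.int c xs := by
  by_contra hyc
  set σ : ℕ → Fm C ar ℕ := fun n => if h : n < ar c then As ⟨n, h⟩ else .var n
  have hσ (i : Fin (ar c)) : σ i = As i := dif_pos i.2
  have hclosed := hG _ ⟨c, xs, fun i => (hAs i).1, y, happ.1, hyc, rfl⟩ σ
  simp only [Set.image_union, Set.image_iUnion, image_subst_appSet, Fm.subst, hσ] at hclosed
  obtain ⟨A, hA, hAG⟩ := hclosed
    (Set.union_subset (Set.iUnion_subset fun i => (hAs i).2.1) happ.2.1)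
    (Set.union_subset (Set.iUnion_subset fun i => (hAsF i).omega (hAs i).1) (happF.omega happ.1))
    (Set.union_subset (Set.iUnion_subset fun i => (hAsF i).mho (hAs i).1) (happF.mho happ.1))
  rcases hA with hA | hA
  · obtain ⟨i, hA⟩ := Set.mem_iUnion.1 hA
    exact Set.disjoint_left.1 (hAs i).2.2 hA hAG
  · exact Set.disjoint_left.1 happ.2.2 hA hAG

theorem RuleClosed.mem_tmset {ι : V → ℕ} (hG : RuleClosed (RT M Sf ι) F G)
    (hι : Function.Injective ι) {X : Set V} {Bf : V → Fm C ar ℕ}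
    (hX : ∀ x ∈ X, IsDiscrValue M Sf G (Bf x) x ∧ SepInstancesIn M Sf (Bf x) F) :
    X ∈ TMset M := by
  by_contra hXT
  have hclosed := hG _ ⟨X, fun x hx => (hX x hx).1.1, hXT, rfl⟩ (Function.extend ι Bf Fm.var)
  simp only [Set.image_iUnion₂, image_subst_appSet, Fm.subst, hι.extend_apply] at hclosed
  obtain ⟨A, hA, hAG⟩ := hclosed (Set.iUnion₂_subset fun x hx => (hX x hx).1.2.1)
    (Set.iUnion₂_subset fun x hx => (hX x hx).2.omega (hX x hx).1.1)
    (Set.iUnion₂_subset fun x hx => (hX x hx).2.mho (hX x hx).1.1)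
  obtain ⟨x, hx, hA⟩ := Set.mem_iUnion₂.1 hA
  exact Set.disjoint_left.1 (hX x hx).1.2.2 hA hAG

theorem RuleClosed.exists_isVal_mem_iff {ι : V → ℕ} {S : Set (Fm C ar ℕ)}
    (hG : RuleClosed (calcR M Sf ι) F G) (hι : Function.Injective ι)
    (hS : ∀ c As, Fm.app c As ∈ S → ∀ i, As i ∈ S)
    (hSF : ∀ B ∈ S, B ∈ F ∧ SepInstancesIn M Sf B F) :
    ∃ u, M.IsVal u ∧ ∀ B ∈ S, B ∈ G ↔ u B ∈ M.desig := by
  have hGex : RuleClosed (Rexists M Sf) F G := hG.mono fun _ h => .inl (.inl (.inl h))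
  have hGD : RuleClosed (RD M Sf) F G := hG.mono fun _ h => .inl (.inl (.inr h))
  have hGSig : RuleClosed (RSig M Sf) F G := hG.mono fun _ h => .inl (.inr h)
  have hGT : RuleClosed (RT M Sf ι) F G := hG.mono fun _ => .inr
  -- `R_T` at `X = ∅` provides a valuation, so `V` is nonempty
  obtain ⟨v₀, -⟩ := hGT.mem_tmset hι (X := ∅) (Bf := fun _ => .var 0) fun _ h => h.elim
  have : Nonempty V := ⟨v₀ (.var 0)⟩
  choose! xv hxv using fun B (hB : B ∈ S) => hGex.exists_isDiscrValue (hSF B hB).2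
  have hattained : xv '' S ∈ TMset M := by
    refine hGT.mem_tmset hι (Bf := Function.invFunOn xv S) fun x hx => ?_
    have hmem := Function.invFunOn_mem hx
    have hval := hxv _ hmem
    rw [Function.invFunOn_eq hx] at hval
    exact ⟨hval, (hSF _ hmem).2⟩
  obtain ⟨u, hu, huS⟩ := exists_isVal_eqOn hS (fun c As hA =>
    hGSig.mem_int_of_isDiscrValue (fun i => hxv _ (hS c As hA i)) (hxv _ hA)
      (fun i => (hSF _ (hS c As hA i)).2) (hSF _ hA).2) hattained
  exact ⟨u, hu, fun B hB =>
    huS hB ▸ hGD.mem_iff_of_isDiscrValue (hxv B hB) (hSF B hB).1 (hSF B hB).2⟩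

theorem sepInstancesIn_genSub {Θ : Set (Fm C ar ℕ)} {B : Fm C ar ℕ} (hB : B ∈ ⋃ A ∈ Θ, A.subf) :
    SepInstancesIn M Sf B (genSub (sepFam M Sf) Θ) := by
  rintro x hx _ ⟨_, ⟨y, hy, hyx, rfl⟩, rfl⟩
  obtain ⟨A, hA, hBA⟩ := Set.mem_iUnion₂.1 hB
  exact .inr ⟨Sf x y, ⟨x, hx, y, hy, hyx, rfl⟩, A, hA, B, hBA, rfl⟩

theorem not_mconseq_of_not_mcd (hfin : M.carrier.Finite) {ι : V → ℕ} (hι : Function.Injective ι)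
    {Γ Δ : Set (Fm C ar ℕ)}
    (h : ¬ MCD (calcR M Sf ι) (genSub (sepFam M Sf) (Γ ∪ Δ)) Δ Γ) : ¬ M.MConseq Γ Δ := by
  obtain ⟨G, hΓG, hGΔ, hG⟩ := exists_ruleClosed_of_not_mcd (calcR_finite hfin) h
  obtain ⟨u, hu, hGu⟩ := hG.exists_isVal_mem_iff hι (fun _ _ => Fm.mem_biUnion_subf_of_app)
    fun B hB => ⟨.inl hB, sepInstancesIn_genSub hB⟩
  have hsub (A : Fm C ar ℕ) (hA : A ∈ Γ ∪ Δ) : A ∈ ⋃ B ∈ Γ ∪ Δ, B.subf :=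
    Set.mem_biUnion hA A.self_mem_subf
  intro hM
  obtain ⟨A, hAΔ, hAD⟩ := hM u hu fun A hA => (hGu A (hsub A (.inl hA))).1 (hΓG hA)
  exact Set.disjoint_left.1 hGΔ ((hGu A (hsub A (.inr hAΔ))).2 hAD) hAΔ

end Completeness

/-- Theorem `analyticity`: for a finite monadic PNmatrix `M` with
discriminator determined by the family `Sf` of separators, the multiple-conclusion
calculus `R_M^{S̃} = R_∃ ∪ R_D ∪ R_Σ ∪ R_T` is a calculus for `▷_M` which is
`𝒮`-analytic: whatever is derivable is derivable using only `𝒮`-subformulas of the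
formulas involved. -/
theorem stmt15 {C : Type} {ar : C → ℕ} {V : Type}
    (M : Mat C ar V) (hWF : M.WF) (hfin : M.carrier.Finite)
    (Sf : V → V → Fm C ar ℕ)
    (hsep : ∀ x ∈ M.carrier, ∀ y ∈ M.carrier, x ≠ y → IsSeparator M (Sf x y) x y)
    (ι : V → ℕ) (hι : Function.Injective ι) :
    (∀ Γ Δ : Set (Fm C ar ℕ), MCD (calcR M Sf ι) Set.univ Δ Γ ↔ M.MConseq Γ Δ) ∧
    (∀ Γ Δ : Set (Fm C ar ℕ), M.MConseq Γ Δ →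
      MCD (calcR M Sf ι) (genSub (sepFam M Sf) (Γ ∪ Δ)) Δ Γ) := by
  have hcomplete (Γ Δ : Set (Fm C ar ℕ)) (h : M.MConseq Γ Δ) :
      MCD (calcR M Sf ι) (genSub (sepFam M Sf) (Γ ∪ Δ)) Δ Γ := by
    by_contra hnd
    exact not_mconseq_of_not_mcd hfin hι hnd h
  refine ⟨fun Γ Δ => ⟨MCD.mconseq (calcR_sound hWF.1 hsep), fun h => ?_⟩, hcomplete⟩
  exact (hcomplete Γ Δ h).mono_F (Set.subset_univ _)

end PNPaper
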